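/- A set S ⊆ ℤ^d is semi-linear (a finite union of linear sets) if and only if S is definable by an existential Presburger formula with d free variables. -/

import Mathlib

/-- A linear subset of ℤ^d: a base vector plus ℕ-combinations of finitely many periods. -/
def LinearSet {d : ℕ} (L : Set (Fin d → ℤ)) : Prop :=
  ∃ (v₀ : Fin d → ℤ) (k : ℕ) (v : Fin k → Fin d → ℤ),
    L = {x | ∃ c : Fin k → ℕ, x = v₀ + ∑ i, (c i : ℤ) • v i}

/-- A semi-linear set: a finite union of linear sets. -/
def SemiLinear {d : ℕ} (S : Set (Fin d → ℤ)) : Prop :=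
  ∃ (m : ℕ) (Ls : Fin m → Set (Fin d → ℤ)), (∀ i, LinearSet (Ls i)) ∧ S = ⋃ i, Ls i

/-- Terms of Presburger arithmetic (with a doubling function), de Bruijn-free variables. -/
inductive RTerm : Type
  | zero | one
  | var (i : ℕ)
  | add (t₁ t₂ : RTerm)
  | double (t : RTerm)
deriving DecidableEq

def RTerm.eval (env : ℕ → ℤ) : RTerm → ℤ
  | .zero => 0
  | .one => 1
  | .var i => env i
  | .add t₁ t₂ => t₁.eval env + t₂.eval env
  | .double t => 2 * t.eval env

/-- Presburger formulas (de Bruijn indices for bound variables). -/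
inductive RForm : Type
  | le (t₁ t₂ : RTerm)
  | and (f g : RForm)
  | or (f g : RForm)
  | not (f : RForm)
  | ex (f : RForm)
  | all (f : RForm)
deriving DecidableEq

def consEnv (z : ℤ) (env : ℕ → ℤ) : ℕ → ℤ := fun n =>
  match n with
  | 0 => z
  | n + 1 => env n

def RForm.Holds : RForm → (ℕ → ℤ) → Prop
  | .le t₁ t₂, env => t₁.eval env ≤ t₂.eval env
  | .and f g, env => f.Holds env ∧ g.Holds env
  | .or f g, env => f.Holds env ∨ g.Holds env
  | .not f, env => ¬ f.Holds env
  | .ex f, env => ∃ z, f.Holds (consEnv z env)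
  | .all f, env => ∀ z, f.Holds (consEnv z env)

/-- All variables of the term are `< d`. -/
def RTerm.ok (d : ℕ) : RTerm → Prop
  | .zero => True
  | .one => True
  | .var i => i < d
  | .add t₁ t₂ => t₁.ok d ∧ t₂.ok d
  | .double t => t.ok d

/-- The formula has (free) variables `< d`. -/
def RForm.ok : ℕ → RForm → Prop
  | d, .le t₁ t₂ => t₁.ok d ∧ t₂.ok d
  | d, .and f g => f.ok d ∧ g.ok d
  | d, .or f g => f.ok d ∧ g.ok d
  | d, .not f => f.ok d
  | d, .ex f => f.ok (d + 1)
  | d, .all f => f.ok (d + 1)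

def RForm.QFree : RForm → Prop
  | .le _ _ => True
  | .and f g => f.QFree ∧ g.QFree
  | .or f g => f.QFree ∧ g.QFree
  | .not f => f.QFree
  | .ex _ => False
  | .all _ => False

mutual
  /-- `SigmaR i f`: `f` is a Σ_i Presburger formula (prenex, `i ≥ 1`,
  starting with a block of existential quantifiers, `i - 1` alternations). -/
  inductive SigmaR : ℕ → RForm → Prop
    | qf {i : ℕ} {f : RForm} (hf : f.QFree) (hi : 1 ≤ i) : SigmaR i f
    | ex {i : ℕ} {f : RForm} (h : SigmaR i f) : SigmaR i (RForm.ex f)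
    | ofPi {i : ℕ} {f : RForm} (h : PiR i f) : SigmaR (i + 1) f
  /-- `PiR i f`: `f` is a Π_i Presburger formula. -/
  inductive PiR : ℕ → RForm → Prop
    | qf {i : ℕ} {f : RForm} (hf : f.QFree) (hi : 1 ≤ i) : PiR i f
    | all {i : ℕ} {f : RForm} (h : PiR i f) : PiR i (RForm.all f)
    | ofSigma {i : ℕ} {f : RForm} (h : SigmaR i f) : PiR (i + 1) f
end

def RTerm.sz : RTerm → ℕ
  | .zero => 1
  | .one => 1
  | .var i => i + 1
  | .add t₁ t₂ => t₁.sz + t₂.sz + 1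
  | .double t => t.sz + 1

/-- Size of a Presburger formula. -/
def RForm.sz : RForm → ℕ
  | .le t₁ t₂ => t₁.sz + t₂.sz + 1
  | .and f g => f.sz + g.sz + 1
  | .or f g => f.sz + g.sz + 1
  | .not f => f.sz + 1
  | .ex f => f.sz + 1
  | .all f => f.sz + 1

/-- Environment (valuation) extending a vector of ℤ^d by zeros. -/
def envOf (d : ℕ) (v : Fin d → ℤ) : ℕ → ℤ := fun n => if h : n < d then v ⟨n, h⟩ else 0

/-!
A Σ₁ formula is a block of existential quantifiers in front of a quantifier-free formula, so the
sets it defines are projections of quantifier-free definable sets. A quantifier-free formula is a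
Boolean combination of inequalities `f w ≤ c` with `f` additive, and the negation of such an
inequality is again one. Semilinear sets are closed under union, intersection and additive images,
and contain all half-spaces, which gives one direction.

Everything rests on the structure of `{x ∈ ℕ^ι | A x = b}` for additive `A`: it is the union,
over its minimal elements `u`, of `u + ker A`. There are finitely many minimal elements and
`ker A` is a finitely generated monoid, both by Dickson's lemma. Half-spaces (with a slack
variable) and intersections of two linear sets are additive images of such solution sets.

Conversely, the union of the linear sets `v₀ᵗ + ℕ v₁ᵗ + ⋯ + ℕ vₖᵗ` is defined by
`∃ c₁ … c_K, ⋁ₜ (x = v₀ᵗ + ∑ᵢ cᵢ vᵢᵗ ∧ ⋀ᵢ 0 ≤ cᵢ)`.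
-/

theorem AddMonoidHom.fg_mker {N M : Type*} [AddCommMonoid N] [PartialOrder N]
    [WellQuasiOrderedLE N] [IsOrderedCancelAddMonoid N] [CanonicallyOrderedAdd N]
    [AddZeroClass M] (A : N →+ M) : (AddMonoidHom.mker A).FG :=
  AddSubmonoid.fg_of_subtractive fun x hx y hxy => by
    rwa [AddMonoidHom.mem_mker, map_add, AddMonoidHom.mem_mker.1 hx, zero_add] at hxy

theorem finite_setOf_minimal {N : Type*} [PartialOrder N] [WellQuasiOrderedLE N] (P : N → Prop) :
    {x | Minimal P x}.Finite :=
  (setOfPred_minimal_antichain P).finite_of_partiallyWellOrderedOn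
    (Set.isPWO_of_wellQuasiOrderedLE _)

theorem setOf_eq_iUnion_minimal_add_mker {N M : Type*} [AddCommMonoid N] [PartialOrder N]
    [WellFoundedLT N] [CanonicallyOrderedAdd N] [AddCancelCommMonoid M] (A : N →+ M) (b : M) :
    {x | A x = b} = ⋃ u ∈ {u | Minimal (A · = b) u}, (u + ·) '' (AddMonoidHom.mker A) := by
  ext x
  simp only [Set.mem_ofPred_eq, Set.mem_iUnion, Set.mem_image, SetLike.mem_coe,
    AddMonoidHom.mem_mker, exists_prop]
  constructor
  · intro hx
    obtain ⟨u, hux, hu⟩ := exists_minimal_le_of_wellFoundedLT (A · = b) x hx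
    obtain ⟨y, rfl⟩ := exists_add_of_le hux
    refine ⟨u, hu, y, ?_, rfl⟩
    rw [map_add, hu.1] at hx
    exact add_eq_left.mp hx
  · rintro ⟨u, hu, y, hy, rfl⟩
    rw [map_add, hu.1, hy, add_zero]

section SemiLinear

variable {n d : ℕ}

theorem semiLinear_iUnion_of_linearSet {ι : Type*} [Finite ι] {L : ι → Set (Fin d → ℤ)}
    (hL : ∀ i, LinearSet (L i)) : SemiLinear (⋃ i, L i) := by
  obtain ⟨m, ⟨e⟩⟩ := Finite.exists_equiv_fin ι
  exact ⟨m, L ∘ e.symm, fun i => hL _, (e.symm.surjective.iUnion_comp L).symm⟩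

theorem SemiLinear.iUnion {ι : Type*} [Finite ι] {S : ι → Set (Fin d → ℤ)}
    (hS : ∀ i, SemiLinear (S i)) : SemiLinear (⋃ i, S i) := by
  choose m L hL hSL using hS
  have hunion : (⋃ i, S i) = ⋃ p : Σ i, Fin (m i), L p.1 p.2 := by
    simp only [Set.iUnion_sigma, hSL]
  exact hunion ▸ semiLinear_iUnion_of_linearSet fun p => hL p.1 p.2

theorem SemiLinear.union {S T : Set (Fin d → ℤ)} (hS : SemiLinear S) (hT : SemiLinear T) :
    SemiLinear (S ∪ T) :=
  Set.union_eq_iUnion ▸ SemiLinear.iUnion fun b => by cases b <;> assumption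

theorem LinearSet.image (φ : (Fin n → ℤ) →+ (Fin d → ℤ)) {L : Set (Fin n → ℤ)}
    (hL : LinearSet L) : LinearSet (φ '' L) := by
  obtain ⟨v₀, k, v, rfl⟩ := hL
  refine ⟨φ v₀, k, fun i => φ (v i), ?_⟩
  ext x
  simp only [Set.mem_image, Set.mem_ofPred_eq]
  constructor
  · rintro ⟨_, ⟨c, rfl⟩, rfl⟩
    exact ⟨c, by simp only [map_add, map_sum, map_zsmul]⟩
  · rintro ⟨c, rfl⟩
    exact ⟨_, ⟨c, rfl⟩, by simp only [map_add, map_sum, map_zsmul]⟩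

theorem SemiLinear.image (φ : (Fin n → ℤ) →+ (Fin d → ℤ)) {S : Set (Fin n → ℤ)}
    (hS : SemiLinear S) : SemiLinear (φ '' S) := by
  obtain ⟨m, L, hL, rfl⟩ := hS
  rw [Set.image_iUnion]
  exact semiLinear_iUnion_of_linearSet fun i => (hL i).image φ

theorem linearSet_add_closure (v₀ : Fin d → ℤ) (P : Finset (Fin d → ℤ)) :
    LinearSet {x | ∃ y ∈ AddSubmonoid.closure (P : Set (Fin d → ℤ)), x = v₀ + y} := by
  let v : Fin P.card → Fin d → ℤ := fun i => P.equivFin.symm i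
  have hP : (P : Set (Fin d → ℤ)) = Set.range v := by
    ext x
    refine ⟨fun hx => ⟨P.equivFin ⟨x, hx⟩, by simp [v]⟩, ?_⟩
    rintro ⟨i, rfl⟩
    exact (P.equivFin.symm i).2
  refine ⟨v₀, P.card, v, ?_⟩
  simp only [hP, AddSubmonoid.mem_closure_range_iff_of_fintype, natCast_zsmul]
  ext x
  simp only [Set.mem_ofPred_eq]
  constructor
  · rintro ⟨_, ⟨c, rfl⟩, rfl⟩
    exact ⟨c, rfl⟩
  · rintro ⟨c, rfl⟩
    exact ⟨_, ⟨c, rfl⟩, rfl⟩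

theorem semiLinear_image_setOf_map_eq {ι M : Type*} [Fintype ι] [AddCancelCommMonoid M]
    (A : (ι → ℕ) →+ M) (b : M) (v₀ : Fin d → ℤ) (φ : (ι → ℕ) →+ (Fin d → ℤ)) :
    SemiLinear ((fun x => v₀ + φ x) '' {x | A x = b}) := by
  classical
  obtain ⟨s, hs⟩ := A.fg_mker
  have := (finite_setOf_minimal (A · = b)).to_subtype
  rw [setOf_eq_iUnion_minimal_add_mker, Set.biUnion_eq_iUnion, Set.image_iUnion]
  refine semiLinear_iUnion_of_linearSet fun u => ?_
  convert linearSet_add_closure (v₀ + φ u) (s.image φ) using 1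
  ext x
  simp only [Set.mem_image, Set.mem_ofPred_eq, ← hs, Finset.coe_image,
    ← AddMonoidHom.map_mclosure, AddSubmonoid.mem_map]
  constructor
  · rintro ⟨_, ⟨y, hy, rfl⟩, rfl⟩
    exact ⟨φ y, ⟨y, hy, rfl⟩, by rw [map_add, add_assoc]⟩
  · rintro ⟨_, ⟨y, hy, rfl⟩, rfl⟩
    exact ⟨u + y, ⟨y, hy, rfl⟩, by rw [map_add, add_assoc]⟩

theorem semiLinear_setOf_le (f : (Fin d → ℤ) →+ ℤ) (c : ℤ) : SemiLinear {w | f w ≤ c} := by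
  let φ : ((Fin d ⊕ Fin d) ⊕ Unit → ℕ) →+ (Fin d → ℤ) :=
    AddMonoidHom.mk' (fun x i => (x (.inl (.inl i)) : ℤ) - x (.inl (.inr i))) fun x y => by
      ext i; simp only [Pi.add_apply]; push_cast; ring
  -- the last coordinate is the slack `c - f w`
  let A : ((Fin d ⊕ Fin d) ⊕ Unit → ℕ) →+ ℤ :=
    AddMonoidHom.mk' (fun x => f (φ x) + x (.inr ())) fun x y => by
      simp only [map_add, Pi.add_apply]; push_cast; ring
  convert semiLinear_image_setOf_map_eq A c 0 φ using 1
  ext w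
  simp only [Set.mem_ofPred_eq, Set.mem_image, zero_add]
  constructor
  · intro hw
    have hφ : φ (Sum.elim (Sum.elim (fun i => (w i).toNat) fun i => (-w i).toNat)
        fun _ => (c - f w).toNat) = w := by
      ext i
      exact Int.toNat_sub_toNat_neg (w i)
    refine ⟨_, ?_, hφ⟩
    change f (φ _) + _ = c
    rw [hφ, Sum.elim_inr, Int.toNat_of_nonneg (sub_nonneg.mpr hw)]
    ring
  · rintro ⟨x, hx, rfl⟩
    change f (φ x) + x (.inr ()) = c at hx
    omega

theorem LinearSet.semiLinear_inter {L₁ L₂ : Set (Fin d → ℤ)} (h₁ : LinearSet L₁)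
    (h₂ : LinearSet L₂) : SemiLinear (L₁ ∩ L₂) := by
  obtain ⟨a, k, u, rfl⟩ := h₁
  obtain ⟨b, l, v, rfl⟩ := h₂
  let φ : (Fin k ⊕ Fin l → ℕ) →+ (Fin d → ℤ) :=
    AddMonoidHom.mk' (fun x => ∑ i, (x (.inl i) : ℤ) • u i) fun x y => by
      simp only [Pi.add_apply, Nat.cast_add, add_smul, Finset.sum_add_distrib]
  let ψ : (Fin k ⊕ Fin l → ℕ) →+ (Fin d → ℤ) :=
    AddMonoidHom.mk' (fun x => ∑ j, (x (.inr j) : ℤ) • v j) fun x y => by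
      simp only [Pi.add_apply, Nat.cast_add, add_smul, Finset.sum_add_distrib]
  convert semiLinear_image_setOf_map_eq (φ - ψ) (b - a) a φ using 1
  ext z
  simp only [Set.mem_inter_iff, Set.mem_ofPred_eq, Set.mem_image, AddMonoidHom.sub_apply,
    sub_eq_sub_iff_add_eq_add]
  constructor
  · rintro ⟨⟨c, rfl⟩, ⟨e, he⟩⟩
    refine ⟨Sum.elim c e, ?_, rfl⟩
    change (∑ i, (c i : ℤ) • u i) + a = b + ∑ j, (e j : ℤ) • v j
    rw [add_comm, ← he]
  · rintro ⟨x, hx, rfl⟩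
    exact ⟨⟨fun i => x (.inl i), rfl⟩, ⟨fun j => x (.inr j), by rw [add_comm, hx]; rfl⟩⟩

theorem SemiLinear.inter {S T : Set (Fin d → ℤ)} (hS : SemiLinear S) (hT : SemiLinear T) :
    SemiLinear (S ∩ T) := by
  obtain ⟨m, L, hL, rfl⟩ := hS
  obtain ⟨m', L', hL', rfl⟩ := hT
  rw [Set.iUnion_inter_iUnion]
  exact SemiLinear.iUnion fun i => SemiLinear.iUnion fun j => (hL i).semiLinear_inter (hL' j)

end SemiLinear

theorem RTerm.exists_eval_envOf_eq {d : ℕ} {t : RTerm} (ht : t.ok d) :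
    ∃ (f : (Fin d → ℤ) →+ ℤ) (c : ℤ), ∀ w, t.eval (envOf d w) = f w + c := by
  induction t with
  | zero => exact ⟨0, 0, fun _ => rfl⟩
  | one => exact ⟨0, 1, fun _ => by simp [RTerm.eval]⟩
  | var i =>
    exact ⟨Pi.evalAddMonoidHom (fun _ => ℤ) ⟨i, ht⟩, 0, fun w => by
      simp [RTerm.eval, envOf, show i < d from ht]⟩
  | add t₁ t₂ ih₁ ih₂ =>
    obtain ⟨f₁, c₁, h₁⟩ := ih₁ ht.1
    obtain ⟨f₂, c₂, h₂⟩ := ih₂ ht.2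
    exact ⟨f₁ + f₂, c₁ + c₂, fun w => by
      simp only [RTerm.eval, h₁, h₂, AddMonoidHom.add_apply]; ring⟩
  | double t ih =>
    obtain ⟨f, c, h⟩ := ih ht
    exact ⟨2 • f, 2 * c, fun w => by
      simp only [RTerm.eval, h, AddMonoidHom.smul_apply]; ring⟩

theorem semiLinear_setOf_holds_of_qFree {d : ℕ} {f : RForm} (hq : f.QFree) (hok : f.ok d) :
    SemiLinear {w : Fin d → ℤ | f.Holds (envOf d w)} ∧
      SemiLinear {w : Fin d → ℤ | ¬ f.Holds (envOf d w)} := by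
  induction f with
  | le t₁ t₂ =>
    obtain ⟨f₁, c₁, h₁⟩ := RTerm.exists_eval_envOf_eq hok.1
    obtain ⟨f₂, c₂, h₂⟩ := RTerm.exists_eval_envOf_eq hok.2
    simp only [RForm.Holds, h₁, h₂]
    constructor
    · convert semiLinear_setOf_le (f₁ - f₂) (c₂ - c₁) using 1
      ext w
      simp only [Set.mem_ofPred_eq, AddMonoidHom.sub_apply]
      omega
    · convert semiLinear_setOf_le (f₂ - f₁) (c₁ - c₂ - 1) using 1
      ext w
      simp only [Set.mem_ofPred_eq, AddMonoidHom.sub_apply]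
      omega
  | and f g ihf ihg =>
    obtain ⟨hf, hf'⟩ := ihf hq.1 hok.1
    obtain ⟨hg, hg'⟩ := ihg hq.2 hok.2
    simp only [RForm.Holds, not_and_or, Set.ofPred_and, Set.ofPred_or]
    exact ⟨hf.inter hg, hf'.union hg'⟩
  | or f g ihf ihg =>
    obtain ⟨hf, hf'⟩ := ihf hq.1 hok.1
    obtain ⟨hg, hg'⟩ := ihg hq.2 hok.2
    simp only [RForm.Holds, not_or, Set.ofPred_and, Set.ofPred_or]
    exact ⟨hf.union hg, hf'.inter hg'⟩
  | not f ih =>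
    simp only [RForm.Holds, not_not]
    exact (ih hq hok).symm
  | ex => exact hq.elim
  | all => exact hq.elim

theorem consEnv_envOf {d : ℕ} (z : ℤ) (v : Fin d → ℤ) :
    consEnv z (envOf d v) = envOf (d + 1) (Fin.cons z v) := by
  funext n
  cases n with
  | zero => rfl
  | succ n => simp only [consEnv, envOf, Nat.add_lt_add_iff_right]; split_ifs <;> rfl

theorem not_piR_zero (f : RForm) : ¬ PiR 0 f := by
  induction f with
  | all f ih =>
    intro h
    cases h with
    | qf _ hi => omega
    | all h => exact ih h
  | _ => intro h; cases h; omega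

theorem SigmaR.qFree_or_ex {f : RForm} (h : SigmaR 1 f) :
    f.QFree ∨ ∃ g, f = .ex g ∧ SigmaR 1 g := by
  cases h with
  | qf hf _ => exact .inl hf
  | ex h => exact .inr ⟨_, rfl, h⟩
  | ofPi h => exact (not_piR_zero _ h).elim

theorem semiLinear_of_sigmaR_one {f : RForm} (hf : SigmaR 1 f) {d : ℕ} (hok : f.ok d) :
    SemiLinear {v : Fin d → ℤ | f.Holds (envOf d v)} := by
  induction f generalizing d with
  | ex g ih =>
    obtain hq | ⟨g, ⟨⟩, hg⟩ := hf.qFree_or_ex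
    · exact hq.elim
    have hproj : {v : Fin d → ℤ | (RForm.ex g).Holds (envOf d v)} =
        (LinearMap.funLeft ℤ ℤ Fin.succ).toAddMonoidHom '' {u | g.Holds (envOf (d + 1) u)} := by
      ext v
      simp only [RForm.Holds, consEnv_envOf, Set.mem_ofPred_eq, Set.mem_image,
        LinearMap.toAddMonoidHom_coe]
      constructor
      · rintro ⟨z, hz⟩
        exact ⟨_, hz, rfl⟩
      · rintro ⟨u, hu, rfl⟩
        exact ⟨u 0, by convert hu; exact Fin.cons_self_tail u⟩
    rw [hproj]
    exact (ih hg hok).image _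
  | _ => exact (semiLinear_setOf_holds_of_qFree (hf.qFree_or_ex.resolve_right (by simp)) hok).1

namespace RTerm

def nsmul : ℕ → RTerm → RTerm
  | 0, _ => zero
  | n + 1, t => add (nsmul n t) t

theorem eval_nsmul (env : ℕ → ℤ) (n : ℕ) (t : RTerm) : (nsmul n t).eval env = n * t.eval env := by
  induction n with
  | zero => simp [nsmul, eval]
  | succ n ih => simp only [nsmul, eval, ih]; push_cast; ring

theorem ok_nsmul {d : ℕ} (n : ℕ) {t : RTerm} (ht : t.ok d) : (nsmul n t).ok d := by
  induction n with
  | zero => trivial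
  | succ n ih => exact ⟨ih, ht⟩

def affine (c : ℕ) : {k : ℕ} → (Fin k → ℕ) → RTerm
  | 0, _ => nsmul c one
  | k + 1, a => add (affine c (Fin.init a)) (nsmul (a (Fin.last k)) (var k))

theorem eval_affine (env : ℕ → ℤ) (c : ℕ) {k : ℕ} (a : Fin k → ℕ) :
    (affine c a).eval env = c + ∑ i, (a i : ℤ) * env i := by
  induction k with
  | zero => simp [affine, eval_nsmul, eval]
  | succ k ih =>
    simp only [affine, eval, ih, eval_nsmul, Fin.sum_univ_castSucc, Fin.init, Fin.val_castSucc,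
      Fin.val_last]
    ring

theorem ok_affine {d : ℕ} (c : ℕ) {k : ℕ} (a : Fin k → ℕ) (hk : k ≤ d) : (affine c a).ok d := by
  induction k with
  | zero => exact ok_nsmul c trivial
  | succ k ih => exact ⟨ih _ (by omega), ok_nsmul _ (show k < d by omega)⟩

end RTerm

namespace RForm

def conj (l : List RForm) : RForm := l.foldr and (le .zero .zero)

def disj (l : List RForm) : RForm := l.foldr or (le .one .zero)

theorem holds_conj (env : ℕ → ℤ) (l : List RForm) : (conj l).Holds env ↔ ∀ f ∈ l, f.Holds env := by
  induction l with
  | nil => simp [conj, Holds]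
  | cons f l ih => simp [conj, Holds, ← ih]

theorem holds_disj (env : ℕ → ℤ) (l : List RForm) : (disj l).Holds env ↔ ∃ f ∈ l, f.Holds env := by
  induction l with
  | nil => simp [disj, Holds, RTerm.eval]
  | cons f l ih => simp [disj, Holds, ← ih]

theorem ok_conj {d : ℕ} {l : List RForm} (h : ∀ f ∈ l, f.ok d) : (conj l).ok d := by
  induction l with
  | nil => exact ⟨trivial, trivial⟩
  | cons f l ih =>
    rw [List.forall_mem_cons] at h
    exact ⟨h.1, ih h.2⟩

theorem ok_disj {d : ℕ} {l : List RForm} (h : ∀ f ∈ l, f.ok d) : (disj l).ok d := by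
  induction l with
  | nil => exact ⟨trivial, trivial⟩
  | cons f l ih =>
    rw [List.forall_mem_cons] at h
    exact ⟨h.1, ih h.2⟩

theorem qFree_conj {l : List RForm} (h : ∀ f ∈ l, f.QFree) : (conj l).QFree := by
  induction l with
  | nil => trivial
  | cons f l ih =>
    rw [List.forall_mem_cons] at h
    exact ⟨h.1, ih h.2⟩

theorem qFree_disj {l : List RForm} (h : ∀ f ∈ l, f.QFree) : (disj l).QFree := by
  induction l with
  | nil => trivial
  | cons f l ih =>
    rw [List.forall_mem_cons] at h
    exact ⟨h.1, ih h.2⟩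

/-- The language has no subtraction, so the negative parts of `c` and `a` in
`x n = c + ∑ i, a i * x i` are moved to the left-hand side. -/
def eqAffine (n : ℕ) (c : ℤ) {k : ℕ} (a : Fin k → ℤ) : RForm :=
  let lhs := RTerm.add (.var n) (RTerm.affine (-c).toNat fun i => (-a i).toNat)
  let rhs := RTerm.affine c.toNat fun i => (a i).toNat
  and (le lhs rhs) (le rhs lhs)

theorem holds_eqAffine (env : ℕ → ℤ) (n : ℕ) (c : ℤ) {k : ℕ} (a : Fin k → ℤ) :
    (eqAffine n c a).Holds env ↔ env n = c + ∑ i, a i * env i := by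
  have hsplit : ∑ i, a i * env i =
      ∑ i, ((a i).toNat : ℤ) * env i - ∑ i, ((-a i).toNat : ℤ) * env i := by
    rw [← Finset.sum_sub_distrib]
    refine Finset.sum_congr rfl fun i _ => ?_
    rw [← sub_mul, Int.toNat_sub_toNat_neg]
  simp only [eqAffine, Holds, RTerm.eval, RTerm.eval_affine, hsplit]
  have := Int.toNat_sub_toNat_neg c
  omega

theorem ok_eqAffine {d n : ℕ} (c : ℤ) {k : ℕ} (a : Fin k → ℤ) (hn : n < d) (hk : k ≤ d) :
    (eqAffine n c a).ok d :=
  have hl : RTerm.ok d (.add (.var n) (RTerm.affine (-c).toNat fun i => (-a i).toNat)) :=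
    ⟨hn, RTerm.ok_affine _ _ hk⟩
  have hr := RTerm.ok_affine c.toNat (fun i => (a i).toNat) hk
  ⟨⟨hl, hr⟩, ⟨hr, hl⟩⟩

def exs : ℕ → RForm → RForm
  | 0, g => g
  | k + 1, g => ex (exs k g)

theorem holds_exs (k : ℕ) (g : RForm) (env : ℕ → ℤ) :
    (exs k g).Holds env ↔ ∃ e : ℕ → ℤ, (∀ n, e (n + k) = env n) ∧ g.Holds e := by
  induction k generalizing env with
  | zero => exact ⟨fun h => ⟨env, fun _ => rfl, h⟩, fun ⟨e, he, h⟩ => funext he ▸ h⟩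
  | succ k ih =>
    simp only [exs, Holds, ih]
    constructor
    · rintro ⟨z, e, he, h⟩
      exact ⟨e, fun n => by rw [← add_assoc, add_right_comm, he]; rfl, h⟩
    · rintro ⟨e, he, h⟩
      refine ⟨e k, e, fun n => ?_, h⟩
      cases n with
      | zero => simp [consEnv]
      | succ n => rw [add_right_comm, add_assoc, he]; rfl

theorem ok_exs {d : ℕ} (k : ℕ) {g : RForm} (hg : g.ok (d + k)) : (exs k g).ok d := by
  induction k generalizing d with
  | zero => exact hg
  | succ k ih => exact ih (by rwa [add_right_comm, add_assoc])

theorem sigmaR_one_exs (k : ℕ) {g : RForm} (hg : g.QFree) : SigmaR 1 (exs k g) := by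
  induction k with
  | zero => exact .qf hg le_rfl
  | succ k ih => exact .ex ih

end RForm

/-- Membership in the linear set with base `v₀` and periods `v`, in an environment whose
variables `0, …, k - 1` hold the coefficients of the periods and whose variable `j + K` holds
coordinate `j`. -/
def linearSetBody (K : ℕ) {d k : ℕ} (v₀ : Fin d → ℤ) (v : Fin k → Fin d → ℤ) : RForm :=
  .and (.conj (List.ofFn fun j : Fin d => .eqAffine (j + K) (v₀ j) fun i => v i j))
    (.conj (List.ofFn fun i : Fin k => .le .zero (.var i)))

theorem qFree_linearSetBody (K : ℕ) {d k : ℕ} (v₀ : Fin d → ℤ) (v : Fin k → Fin d → ℤ) :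
    (linearSetBody K v₀ v).QFree :=
  ⟨RForm.qFree_conj (by simp [RForm.eqAffine, RForm.QFree]),
    RForm.qFree_conj (by simp [RForm.QFree])⟩

theorem ok_linearSetBody {K d k : ℕ} (hk : k ≤ K) (v₀ : Fin d → ℤ) (v : Fin k → Fin d → ℤ) :
    (linearSetBody K v₀ v).ok (d + K) := by
  refine ⟨RForm.ok_conj ?_, RForm.ok_conj ?_⟩ <;> simp only [List.forall_mem_ofFn_iff]
  · exact fun j => RForm.ok_eqAffine _ _ (by omega) (by omega)
  · exact fun i => ⟨trivial, show (i : ℕ) < d + K by omega⟩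

theorem exists_holds_linearSetBody_iff {K d k : ℕ} (hk : k ≤ K) (v₀ : Fin d → ℤ)
    (v : Fin k → Fin d → ℤ) (x : Fin d → ℤ) :
    (∃ e : ℕ → ℤ, (∀ n, e (n + K) = envOf d x n) ∧ (linearSetBody K v₀ v).Holds e) ↔
      ∃ c : Fin k → ℕ, x = v₀ + ∑ i, (c i : ℤ) • v i := by
  simp only [linearSetBody, RForm.Holds, RForm.holds_conj, List.forall_mem_ofFn_iff,
    RForm.holds_eqAffine, RTerm.eval, funext_iff, Pi.add_apply, Finset.sum_apply, Pi.smul_apply,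
    smul_eq_mul]
  constructor
  · rintro ⟨e, he, hx, hc⟩
    refine ⟨fun i => (e i).toNat, fun j => ?_⟩
    have hxj : x j = e (j + K) := by simp [he, envOf]
    rw [hxj, hx j]
    simp only [Int.toNat_of_nonneg (hc _), mul_comm]
  · rintro ⟨c, hc⟩
    refine ⟨fun n => if h : n < k then c ⟨n, h⟩ else envOf d x (n - K), fun n => ?_,
      fun j => ?_, fun i => ?_⟩
    · simp [show ¬ n + K < k by omega]
    · simp [show ¬ (j : ℕ) + K < k by omega, envOf, hc j, mul_comm]
    · simp

theorem exists_sigmaR_one_of_semiLinear {d : ℕ} {S : Set (Fin d → ℤ)} (hS : SemiLinear S) :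
    ∃ f : RForm, SigmaR 1 f ∧ f.ok d ∧ S = {v | f.Holds (envOf d v)} := by
  obtain ⟨m, L, hL, rfl⟩ := hS
  choose v₀ k v hLv using hL
  let K := Finset.univ.sup k
  have hkK : ∀ t, k t ≤ K := fun t => Finset.le_sup (Finset.mem_univ t)
  let body := RForm.disj (List.ofFn fun t => linearSetBody K (v₀ t) (v t))
  refine ⟨.exs K body, RForm.sigmaR_one_exs K (RForm.qFree_disj ?_),
    RForm.ok_exs K (RForm.ok_disj ?_), ?_⟩
  · simpa only [List.forall_mem_ofFn_iff] using fun t => qFree_linearSetBody K (v₀ t) (v t)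
  · simpa only [List.forall_mem_ofFn_iff] using fun t => ok_linearSetBody (hkK t) (v₀ t) (v t)
  ext x
  simp only [Set.mem_iUnion, Set.mem_ofPred_eq, RForm.holds_exs, body, RForm.holds_disj,
    List.mem_ofFn, exists_exists_eq_and]
  simp only [← exists_and_left]
  rw [exists_comm]
  refine exists_congr fun t => ?_
  rw [hLv, Set.mem_ofPred_eq, exists_holds_linearSetBody_iff (hkK t)]

/-- A set `S ⊆ ℤ^d` is semi-linear iff it is definable by an
existential Presburger formula with `d` free variables. -/
theorem semilinear_iff_existential_presburger (d : ℕ) (S : Set (Fin d → ℤ)) :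
    SemiLinear S ↔
      ∃ f : RForm, SigmaR 1 f ∧ f.ok d ∧ S = {v | f.Holds (envOf d v)} := by
  refine ⟨exists_sigmaR_one_of_semiLinear, ?_⟩
  rintro ⟨f, hf, hok, rfl⟩
  exact semiLinear_of_sigmaR_one hf hok
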